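/- arXiv:2303.04493 — 2 statements merged into one kernel-verified Lean document; each statement's English description precedes it below -/
import Mathlib

section
/- The induction functor I : Z(Vect_H^ω) → Z(Vect_G^ω) is both a braided lax monoidal functor and a braided oplax monoidal functor: μ_{W,V}∘c_{I(V),I(W)} = I(c_{V,W})∘μ_{V,W} and c_{I(V),I(W)}∘ν_{V,W} = ν_{W,V}∘I(c_{V,W}) for all V, W; moreover I preserves the ribbon twist θ given by θ_V(v_d) = d·v_d, i.e. I(θ_V) = θ_{I(V)} for every V. -/
open scoped TensorProduct

namespace DW

/-! ### Cocycle combinatorics -/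

section Cocycle

variable {G : Type*} [Group G] {M : Type*} [CommGroup M]

/-- The 3-cocycle condition for a function `ω : G³ → M`. -/
def IsCocycle (ω : G → G → G → M) : Prop :=
  ∀ a b c d : G, ω (a * b) c d * ω a b (c * d) = ω a b c * ω a (b * c) d * ω b c d

/-- `ω` is normalized if it takes the value `1` whenever an argument is `1`. -/
def IsNormalized (ω : G → G → G → M) : Prop :=
  ∀ a b c : G, a = 1 ∨ b = 1 ∨ c = 1 → ω a b c = 1

/-- `τ(h,k)(d) = ω(h,k,d)·ω(hkd(hk)⁻¹,h,k)/ω(h,kdk⁻¹,k)`. -/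
def tauc (ω : G → G → G → M) (h k d : G) : M :=
  ω h k d * ω (h * k * d * (h * k)⁻¹) h k * (ω h (k * d * k⁻¹) k)⁻¹

/-- `γ(h)(d,f) = ω(h,d,f)·ω(hdh⁻¹,hfh⁻¹,h)/ω(hdh⁻¹,h,f)`. -/
def gamc (ω : G → G → G → M) (h d f : G) : M :=
  ω h d f * ω (h * d * h⁻¹) (h * f * h⁻¹) h * (ω (h * d * h⁻¹) h f)⁻¹

end Cocycle

/-! ### Twisted Yetter–Drinfeld modules -/

/-- A twisted Yetter–Drinfeld module structure over `(G, ω)` on a `k`-vector space `M`: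
a `G`-grading (given internally by submodules) together with a twisted `G`-action. -/
structure YDOn (k : Type*) [Field k] {G : Type*} [Group G] [DecidableEq G]
    (ω : G → G → G → kˣ) (M : Type*) [AddCommGroup M] [Module k M] where
  grading : G → Submodule k M
  internal : DirectSum.IsInternal grading
  act : G → M →ₗ[k] M
  act_one : act 1 = LinearMap.id
  act_mem : ∀ (g d : G), ∀ v ∈ grading d, act g v ∈ grading (g * d * g⁻¹)
  act_act : ∀ (h g d : G), ∀ v ∈ grading d,
    act h (act g v) = ((tauc ω h g d : kˣ) : k) • act (h * g) v

section YD

variable {k : Type*} [Field k] {G : Type*} [Group G] [DecidableEq G] {ω : G → G → G → kˣ}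

/-- Morphisms of twisted Yetter–Drinfeld modules: grading-preserving and `G`-equivariant. -/
def IsYDHom {M N : Type*} [AddCommGroup M] [Module k M] [AddCommGroup N] [Module k N]
    (S : YDOn k ω M) (T : YDOn k ω N) (f : M →ₗ[k] N) : Prop :=
  (∀ d : G, ∀ v ∈ S.grading d, f v ∈ T.grading d) ∧
  ∀ g : G, f ∘ₗ S.act g = T.act g ∘ₗ f

/-- `θ` is the ribbon twist map, i.e. `θ(v_d) = d·v_d` on homogeneous elements. -/
def IsTwistMap {M : Type*} [AddCommGroup M] [Module k M] (S : YDOn k ω M)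
    (θ : M →ₗ[k] M) : Prop :=
  ∀ d : G, ∀ v ∈ S.grading d, θ v = S.act d v

/-- `T` is the tensor-product Yetter–Drinfeld structure on `V ⊗ W`:
grading `(V⊗W)_d = ⊕_{ab=d} V_a ⊗ W_b`, action `h·(v_a⊗w_b) = γ(h)(a,b) (h·v ⊗ h·w)`. -/
def IsTensorStruct {V W : Type*} [AddCommGroup V] [Module k V] [AddCommGroup W] [Module k W]
    (SV : YDOn k ω V) (SW : YDOn k ω W) (T : YDOn k ω (V ⊗[k] W)) : Prop :=
  (∀ d : G, T.grading d =
      ⨆ a : G, Submodule.map₂ (TensorProduct.mk k V W) (SV.grading a) (SW.grading (a⁻¹ * d))) ∧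
  ∀ (h a b : G) (v : V) (w : W), v ∈ SV.grading a → w ∈ SW.grading b →
    T.act h (v ⊗ₜ[k] w) = ((gamc ω h a b : kˣ) : k) • (SV.act h v ⊗ₜ[k] SW.act h w)

/-- `c` is the braiding `c_{V,W}(v_g ⊗ w) = (g·w) ⊗ v_g`. -/
def IsBraidingMap {V W : Type*} [AddCommGroup V] [Module k V] [AddCommGroup W] [Module k W]
    (SV : YDOn k ω V) (SW : YDOn k ω W) (c : V ⊗[k] W →ₗ[k] W ⊗[k] V) : Prop :=
  ∀ (g : G) (v : V) (w : W), v ∈ SV.grading g → c (v ⊗ₜ[k] w) = SW.act g w ⊗ₜ[k] v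

/-- `a` is the associator `α((u_g⊗v_h)⊗w_l) = ω(g,h,l)⁻¹ u⊗(v⊗w)`. -/
def IsAssocMap {U V W : Type*} [AddCommGroup U] [Module k U] [AddCommGroup V] [Module k V]
    [AddCommGroup W] [Module k W]
    (SU : YDOn k ω U) (SV : YDOn k ω V) (SW : YDOn k ω W)
    (a : (U ⊗[k] V) ⊗[k] W →ₗ[k] U ⊗[k] (V ⊗[k] W)) : Prop :=
  ∀ (g h l : G) (u : U) (v : V) (w : W),
    u ∈ SU.grading g → v ∈ SV.grading h → w ∈ SW.grading l →
    a ((u ⊗ₜ[k] v) ⊗ₜ[k] w) = (((ω g h l)⁻¹ : kˣ) : k) • (u ⊗ₜ[k] (v ⊗ₜ[k] w))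

/-- `a` is the inverse associator `α⁻¹(u_g⊗(v_h⊗w_l)) = ω(g,h,l) (u⊗v)⊗w`. -/
def IsAssocInvMap {U V W : Type*} [AddCommGroup U] [Module k U] [AddCommGroup V] [Module k V]
    [AddCommGroup W] [Module k W]
    (SU : YDOn k ω U) (SV : YDOn k ω V) (SW : YDOn k ω W)
    (a : U ⊗[k] (V ⊗[k] W) →ₗ[k] (U ⊗[k] V) ⊗[k] W) : Prop :=
  ∀ (g h l : G) (u : U) (v : V) (w : W),
    u ∈ SU.grading g → v ∈ SV.grading h → w ∈ SW.grading l →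
    a (u ⊗ₜ[k] (v ⊗ₜ[k] w)) = ((ω g h l : kˣ) : k) • ((u ⊗ₜ[k] v) ⊗ₜ[k] w)

/-- The unit object: `k` concentrated in degree `1` with trivial action. -/
def IsUnitStruct (S : YDOn k ω k) : Prop :=
  S.grading 1 = ⊤ ∧ (∀ d : G, d ≠ 1 → S.grading d = ⊥) ∧ ∀ g : G, S.act g = LinearMap.id

end YD

/-! ### The induction functor -/

section Induced

variable {k : Type*} [Field k] {G : Type*} [Group G] [DecidableEq G]
variable (ω : G → G → G → kˣ) (H : Subgroup G)

/-- Restriction of a 3-cocycle on `G` to a subgroup `H`. -/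
def resCocycle : ↥H → ↥H → ↥H → kˣ := fun a b c => ω ↑a ↑b ↑c

variable {V : Type*} [AddCommGroup V] [Module k V]

/-- The relations `g h ⊗ v_d = τ(g,h)(d)⁻¹ g ⊗ (h·v_d)` defining `I(V) = kG ⊗_{kH} V`. -/
noncomputable def indRel (S : YDOn k (resCocycle ω H) V) : Submodule k (G →₀ V) :=
  Submodule.span k
    {x | ∃ (g : G) (h d : ↥H) (v : V), v ∈ S.grading d ∧
      x = Finsupp.single (g * ↑h) v
        - (((tauc ω g ↑h ↑d)⁻¹ : kˣ) : k) • Finsupp.single g (S.act h v)}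

/-- The carrier of the induced module `I(V)`. -/
abbrev IndCarrier (S : YDOn k (resCocycle ω H) V) : Type _ :=
  (G →₀ V) ⧸ indRel ω H S

/-- The generator `g ⊗ v` of `I(V)`. -/
noncomputable def jgen (S : YDOn k (resCocycle ω H) V) (g : G) (v : V) : IndCarrier ω H S :=
  Submodule.Quotient.mk (Finsupp.single g v)

/-- `T` is the twisted Yetter–Drinfeld structure of the induced module `I(V)`:
`deg (g⊗v_e) = g e g⁻¹` and `c ⊳ (g⊗v_e) = τ(c,g)(e) (cg ⊗ v_e)`. -/
def IsIndStruct (S : YDOn k (resCocycle ω H) V) (T : YDOn k ω (IndCarrier ω H S)) : Prop :=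
  (∀ d : G, T.grading d = Submodule.span k
      {x | ∃ (g : G) (e : ↥H) (v : V), v ∈ S.grading e ∧ g * ↑e * g⁻¹ = d ∧
        x = jgen ω H S g v}) ∧
  ∀ (c g : G) (e : ↥H) (v : V), v ∈ S.grading e →
    T.act c (jgen ω H S g v) = ((tauc ω c g ↑e : kˣ) : k) • jgen ω H S (c * g) v

/-- `F` is the induced morphism `I(f)` of a morphism `f`. -/
def IsIndMap {W : Type*} [AddCommGroup W] [Module k W]
    (S : YDOn k (resCocycle ω H) V) (S' : YDOn k (resCocycle ω H) W)
    (f : V →ₗ[k] W) (F : IndCarrier ω H S →ₗ[k] IndCarrier ω H S') : Prop :=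
  ∀ (g : G) (v : V), F (jgen ω H S g v) = jgen ω H S' g (f v)

/-- `ν` is the oplax structure map
`ν(g ⊗ (a_d ⊗ b_f)) = γ(g)(d,f) (g⊗a) ⊗ (g⊗b)`. -/
def IsNuMap {A B : Type*} [AddCommGroup A] [Module k A] [AddCommGroup B] [Module k B]
    (SA : YDOn k (resCocycle ω H) A) (SB : YDOn k (resCocycle ω H) B)
    (SAB : YDOn k (resCocycle ω H) (A ⊗[k] B))
    (ν : IndCarrier ω H SAB →ₗ[k] IndCarrier ω H SA ⊗[k] IndCarrier ω H SB) : Prop :=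
  ∀ (g : G) (d f : ↥H) (a : A) (b : B), a ∈ SA.grading d → b ∈ SB.grading f →
    ν (jgen ω H SAB g (a ⊗ₜ[k] b)) =
      ((gamc ω g ↑d ↑f : kˣ) : k) • (jgen ω H SA g a ⊗ₜ[k] jgen ω H SB g b)

/-- `μ` is the lax structure map: zero across distinct cosets and
`μ((g⊗a_d) ⊗ (g⊗b_f)) = γ(g)(d,f)⁻¹ (g ⊗ (a⊗b))`. -/
def IsMuMap {A B : Type*} [AddCommGroup A] [Module k A] [AddCommGroup B] [Module k B]
    (SA : YDOn k (resCocycle ω H) A) (SB : YDOn k (resCocycle ω H) B)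
    (SAB : YDOn k (resCocycle ω H) (A ⊗[k] B))
    (μ : IndCarrier ω H SA ⊗[k] IndCarrier ω H SB →ₗ[k] IndCarrier ω H SAB) : Prop :=
  (∀ g g' : G, g⁻¹ * g' ∉ H → ∀ (a : A) (b : B),
      μ (jgen ω H SA g a ⊗ₜ[k] jgen ω H SB g' b) = 0) ∧
  ∀ (g : G) (d f : ↥H) (a : A) (b : B), a ∈ SA.grading d → b ∈ SB.grading f →
    μ (jgen ω H SA g a ⊗ₜ[k] jgen ω H SB g b) =
      (((gamc ω g ↑d ↑f)⁻¹ : kˣ) : k) • jgen ω H SAB g (a ⊗ₜ[k] b)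

/-- The counit `I(1) → 1`, `g ⊗ c ↦ c`. -/
def IsCounitMap (S1 : YDOn k (resCocycle ω H) k)
    (ε : IndCarrier ω H S1 →ₗ[k] k) : Prop :=
  ∀ (g : G) (c : k), ε (jgen ω H S1 g c) = c

/-- The unit `1 → I(1)`, `1 ↦ ∑ᵢ gᵢ ⊗ 1` over a set `R` of left coset representatives. -/
def IsUnitMap (S1 : YDOn k (resCocycle ω H) k) (R : Finset G)
    (η : k →ₗ[k] IndCarrier ω H S1) : Prop :=
  (∀ g : G, ∃! r, r ∈ R ∧ g⁻¹ * r ∈ H) ∧ η 1 = ∑ r ∈ R, jgen ω H S1 r (1 : k)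

end Induced

/-! ### The coset algebra and classification data -/

section AH

variable (k : Type*) [Field k] {G : Type*} [Group G]

/-- The twisted action of `G` on functions on `G/H` : `(c·f)(x) = f(c⁻¹x)`. -/
def cosetAct (H : Subgroup G) (c : G) : ((G ⧸ H) → k) →ₗ[k] ((G ⧸ H) → k) :=
  LinearMap.funLeft k k fun x => c⁻¹ • x

/-- Basis element `e_n` of the twisted group algebra `B(N,κ,ε)`. -/
noncomputable def bGen {H : Type*} [Group H] (N : Subgroup H) (n : ↥N) : ↥N →₀ k :=
  Finsupp.single n 1

end AH

section ClassData

variable {H : Type*} [Group H] {M : Type*} [CommGroup M]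

/-- The conditions on the classification data `(N, κ, ε)` from Davydov–Simmons. -/
def ClassData (ω : H → H → H → M) (N : Subgroup H) (κ ε : H → H → M) : Prop :=
  (∀ n ∈ N, κ n 1 = 1 ∧ κ 1 n = 1) ∧
  (∀ n ∈ N, ∀ m ∈ N, ∀ l ∈ N,
      ω n m l = κ n m * (κ m l)⁻¹ * κ (n * m) l * (κ n (m * l))⁻¹) ∧
  (∀ h g : H, ∀ n ∈ N, tauc ω h g n = ε h (g * n * g⁻¹) * ε g n * (ε (h * g) n)⁻¹) ∧
  (∀ h : H, ∀ n ∈ N, ∀ m ∈ N,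
      gamc ω h n m
        = ε h (n * m) * (ε h n)⁻¹ * (ε h m)⁻¹ * κ (h * n * h⁻¹) (h * m * h⁻¹) * (κ n m)⁻¹) ∧
  ∀ n ∈ N, ∀ m ∈ N, κ (n * m * n⁻¹) n = ε n m * κ n m

end ClassData

section BStruct

variable {k : Type*} [Field k] {H : Type*} [Group H] [DecidableEq H]

/-- The twisted Yetter–Drinfeld structure of `B(N,κ,ε)`:
`e_n` has degree `n` and `h·e_n = ε_h(n) e_{hnh⁻¹}`. -/
def IsBStruct (ω : H → H → H → kˣ) (N : Subgroup H) (hN : N.Normal) (ε : H → H → kˣ)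
    (S : YDOn k ω (↥N →₀ k)) : Prop :=
  (∀ d : H, S.grading d = Submodule.span k {x | ∃ n : ↥N, ↑n = d ∧ x = bGen k N n}) ∧
  ∀ (h : H) (n : ↥N), S.act h (bGen k N n) =
    ((ε h ↑n : kˣ) : k) • bGen k N ⟨h * ↑n * h⁻¹, hN.conj_mem ↑n n.2 h⟩

/-- The multiplication of `B(N,κ,ε)`: `e_n e_m = κ(n,m)⁻¹ e_{nm}`. -/
def IsBMul (N : Subgroup H) (κ : H → H → kˣ)
    (mulB : (↥N →₀ k) ⊗[k] (↥N →₀ k) →ₗ[k] (↥N →₀ k)) : Prop :=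
  ∀ n m : ↥N, mulB (bGen k N n ⊗ₜ[k] bGen k N m) =
    (((κ ↑n ↑m)⁻¹ : kˣ) : k) • bGen k N (n * m)

end BStruct

/-! ### Algebras, étale algebras and Frobenius algebras in the category -/

section Algebras

variable {k : Type*} [Field k] {G : Type*} [Group G] [DecidableEq G] {ω : G → G → G → kˣ}
variable {M : Type*} [AddCommGroup M] [Module k M]

/-- `(M, mulM, uM)` is a connected étale (= connected commutative separable) algebra in
`Z(Vect_G^ω)`. -/
def IsConnectedEtale (T : YDOn k ω M) (mulM : M ⊗[k] M →ₗ[k] M) (uM : k →ₗ[k] M) : Prop :=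
  -- the multiplication is a morphism in the category
  (∃ Tt : YDOn k ω (M ⊗[k] M), IsTensorStruct T T Tt ∧ IsYDHom Tt T mulM) ∧
  -- the unit is a morphism in the category
  (uM 1 ∈ T.grading 1) ∧ (∀ g : G, T.act g (uM 1) = uM 1) ∧
  -- unitality
  (∀ x : M, mulM (uM 1 ⊗ₜ[k] x) = x ∧ mulM (x ⊗ₜ[k] uM 1) = x) ∧
  -- associativity (with respect to the associator of the category)
  (∃ a, IsAssocMap T T T a ∧
      mulM ∘ₗ TensorProduct.map mulM LinearMap.id
        = mulM ∘ₗ TensorProduct.map LinearMap.id mulM ∘ₗ a) ∧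
  -- commutativity
  (∃ c, IsBraidingMap T T c ∧ mulM ∘ₗ c = mulM) ∧
  -- separability
  (∃ (Δ' : M →ₗ[k] M ⊗[k] M) (Tt : YDOn k ω (M ⊗[k] M))
      (a : (M ⊗[k] M) ⊗[k] M →ₗ[k] M ⊗[k] (M ⊗[k] M))
      (a' : M ⊗[k] (M ⊗[k] M) →ₗ[k] (M ⊗[k] M) ⊗[k] M),
      IsTensorStruct T T Tt ∧ IsAssocMap T T T a ∧ IsAssocInvMap T T T a' ∧
      IsYDHom T Tt Δ' ∧ mulM ∘ₗ Δ' = LinearMap.id ∧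
      TensorProduct.map LinearMap.id mulM ∘ₗ a ∘ₗ TensorProduct.map Δ' LinearMap.id
        = Δ' ∘ₗ mulM ∧
      Δ' ∘ₗ mulM
        = TensorProduct.map mulM LinearMap.id ∘ₗ a' ∘ₗ TensorProduct.map LinearMap.id Δ') ∧
  -- connectedness : Hom(1, M) is one-dimensional
  Module.finrank k
    ↥(T.grading 1 ⊓ ⨅ g : G, LinearMap.eqLocus (T.act g) (LinearMap.id : M →ₗ[k] M)) = 1

/-- `(M, mulM, uM)` is a rigid Frobenius (= connected commutative special Frobenius)
algebra in `Z(Vect_G^ω)`. -/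
def IsRigidFrobenius (T : YDOn k ω M) (mulM : M ⊗[k] M →ₗ[k] M) (uM : k →ₗ[k] M) : Prop :=
  IsConnectedEtale T mulM uM ∧
  ∃ (Δ : M →ₗ[k] M ⊗[k] M) (εM : M →ₗ[k] k),
    -- Δ and ε are morphisms in the category
    (∃ Tt : YDOn k ω (M ⊗[k] M), IsTensorStruct T T Tt ∧ IsYDHom T Tt Δ) ∧
    (∀ g : G, εM ∘ₗ T.act g = εM) ∧ (∀ d : G, d ≠ 1 → ∀ v ∈ T.grading d, εM v = 0) ∧
    -- coassociativity and counitality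
    (∀ a, IsAssocMap T T T a →
        a ∘ₗ TensorProduct.map Δ LinearMap.id ∘ₗ Δ = TensorProduct.map LinearMap.id Δ ∘ₗ Δ) ∧
    (TensorProduct.lid k M).toLinearMap ∘ₗ TensorProduct.map εM LinearMap.id ∘ₗ Δ
      = LinearMap.id ∧
    (TensorProduct.rid k M).toLinearMap ∘ₗ TensorProduct.map LinearMap.id εM ∘ₗ Δ
      = LinearMap.id ∧
    -- the Frobenius compatibility
    (∀ a a', IsAssocMap T T T a → IsAssocInvMap T T T a' →
        TensorProduct.map mulM LinearMap.id ∘ₗ a' ∘ₗ TensorProduct.map LinearMap.id Δ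
          = Δ ∘ₗ mulM ∧
        Δ ∘ₗ mulM = TensorProduct.map LinearMap.id mulM ∘ₗ a ∘ₗ TensorProduct.map Δ LinearMap.id) ∧
    -- specialness
    (∃ β : k, β ≠ 0 ∧ mulM ∘ₗ Δ = β • LinearMap.id) ∧
    ∃ β1 : k, β1 ≠ 0 ∧ εM (uM 1) = β1

/-- `(V, ρ)` is a local right module over the commutative algebra `(A, mulA, u)`. -/
def IsLocModule {A V : Type*} [AddCommGroup A] [Module k A] [AddCommGroup V] [Module k V]
    (SA : YDOn k ω A) (mulA : A ⊗[k] A →ₗ[k] A) (u : A)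
    (SV : YDOn k ω V) (ρ : V →ₗ[k] A →ₗ[k] V) : Prop :=
  (∀ d e : G, ∀ v ∈ SV.grading d, ∀ a ∈ SA.grading e, ρ v a ∈ SV.grading (d * e)) ∧
  (∀ v : V, ρ v u = v) ∧
  (∀ (d e f : G) (v : V) (a b : A), v ∈ SV.grading d → a ∈ SA.grading e → b ∈ SA.grading f →
      ρ (ρ v a) b = (((ω d e f)⁻¹ : kˣ) : k) • ρ v (mulA (a ⊗ₜ[k] b))) ∧
  (∀ (h d e : G) (v : V) (a : A), v ∈ SV.grading d → a ∈ SA.grading e →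
      SV.act h (ρ v a) = ((gamc ω h d e : kˣ) : k) • ρ (SV.act h v) (SA.act h a)) ∧
  ∀ (d e : G) (v : V) (a : A), v ∈ SV.grading d → a ∈ SA.grading e →
    ρ v a = ρ (SV.act (d * e * d⁻¹) v) (SA.act d a)

/-- The submodule of `X ⊗ Y` which is divided out to form the relative tensor product
`X ⊗_A Y` over a commutative algebra `A` (the left action on `Y` is obtained from the
right action through the braiding). -/
def relLoc {A X Y : Type*} [AddCommGroup A] [Module k A] [AddCommGroup X] [Module k X]
    [AddCommGroup Y] [Module k Y]
    (SA : YDOn k ω A) (SY : YDOn k ω Y)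
    (ρX : X →ₗ[k] A →ₗ[k] X) (ρY : Y →ₗ[k] A →ₗ[k] Y) : Submodule k (X ⊗[k] Y) :=
  Submodule.span k
    {t | ∃ (e : G) (a : A) (x : X) (y : Y), a ∈ SA.grading e ∧
      t = ρX x a ⊗ₜ[k] y - x ⊗ₜ[k] ρY (SY.act e y) a}

end Algebras

end DW

/-! Everything is checked on generators `g ⊗ v` of the induced modules with `v` homogeneous.
The braiding of `I(V) ⊗ I(W)` and the twist of `I(V)` both act on `g ⊗ v` (with `v` of
degree `d`) through the element `g d g⁻¹`, and the defining relation of `I(V)` moves it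
across the tensor sign: `g d g⁻¹ · (g ⊗ v_e) = τ(gdg⁻¹,g)(e) τ(g,d)(e)⁻¹ · g ⊗ (d · v_e)`.
The identities `τ(gdg⁻¹,g)(f) / τ(g,d)(f) = γ(g)(dfd⁻¹,d) / γ(g)(d,f)` and
`τ(gdg⁻¹,g)(d) = τ(g,d)(d)` follow from the definitions by cancellation, and they are the
scalars by which `μ`, `ν` and `θ` have to be compatible with this. -/

namespace DW

section Cocycle

variable {G : Type*} [Group G] {M : Type*} [CommGroup M] (ω : G → G → G → M)

theorem tauc_conj_mul_inv (g d f : G) :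
    tauc ω (g * d * g⁻¹) g f * (tauc ω g d f)⁻¹
      = gamc ω g (d * f * d⁻¹) d * (gamc ω g d f)⁻¹ := by
  have e₁ : g * d * g⁻¹ * g * f * (g * d * g⁻¹ * g)⁻¹ = g * (d * f * d⁻¹) * g⁻¹ := by group
  have e₂ : g * d * f * (g * d)⁻¹ = g * (d * f * d⁻¹) * g⁻¹ := by group
  simp only [gamc, tauc, e₁, e₂]
  simp [mul_comm, mul_left_comm, mul_assoc]

theorem tauc_conj_self (g d : G) : tauc ω (g * d * g⁻¹) g d = tauc ω g d d := by
  have e₁ : g * d * g⁻¹ * g * d * (g * d * g⁻¹ * g)⁻¹ = g * d * g⁻¹ := by group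
  have e₂ : g * d * d * (g * d)⁻¹ = g * d * g⁻¹ := by group
  have e₃ : d * d * d⁻¹ = d := by group
  simp only [tauc, e₁, e₂, e₃]
  simp

end Cocycle

section Induction

variable {k : Type*} [Field k] {G : Type*} [Group G] [DecidableEq G]
variable {ω : G → G → G → kˣ} {H : Subgroup G}
variable {V W : Type*} [AddCommGroup V] [Module k V] [AddCommGroup W] [Module k W]

theorem YDOn.span_homogeneous_eq_top (S : YDOn k (resCocycle ω H) V) :
    Submodule.span k (⋃ d, (S.grading d : Set V)) = ⊤ :=
  (Submodule.iSup_eq_span _).symm.trans S.internal.submodule_iSup_eq_top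

theorem YDOn.span_tmul_homogeneous_eq_top (S : YDOn k (resCocycle ω H) V)
    (S' : YDOn k (resCocycle ω H) W) :
    Submodule.span k {t : V ⊗[k] W | ∃ (d f : ↥H) (a : V) (b : W),
      a ∈ S.grading d ∧ b ∈ S'.grading f ∧ t = a ⊗ₜ[k] b} = ⊤ := by
  rw [eq_top_iff, ← TensorProduct.map₂_mk_top_top_eq_top, ← S.span_homogeneous_eq_top,
    ← S'.span_homogeneous_eq_top, Submodule.map₂_span_span]
  refine Submodule.span_mono ?_
  rintro t ⟨a, ha, b, hb, rfl⟩
  obtain ⟨d, ha⟩ := Set.mem_iUnion.1 ha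
  obtain ⟨f, hb⟩ := Set.mem_iUnion.1 hb
  exact ⟨d, f, a, b, ha, hb, rfl⟩

theorem jgen_mul_of_mem (S : YDOn k (resCocycle ω H) V) (g : G) (h d : ↥H) {v : V}
    (hv : v ∈ S.grading d) :
    jgen ω H S (g * ↑h) v = (((tauc ω g ↑h ↑d)⁻¹ : kˣ) : k) • jgen ω H S g (S.act h v) := by
  rw [jgen, jgen, ← Submodule.Quotient.mk_smul, Submodule.Quotient.eq]
  exact Submodule.subset_span ⟨g, h, d, v, hv, rfl⟩

theorem ind_hom_ext {N : Type*} [AddCommGroup N] [Module k N] (S : YDOn k (resCocycle ω H) V)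
    {s : Set V} (hs : Submodule.span k s = ⊤) {f₁ f₂ : IndCarrier ω H S →ₗ[k] N}
    (h : ∀ g, ∀ v ∈ s, f₁ (jgen ω H S g v) = f₂ (jgen ω H S g v)) : f₁ = f₂ :=
  Submodule.linearMap_qext _ <| Finsupp.lhom_ext' fun g => LinearMap.ext_on hs (h g)

theorem ind_hom_ext_homogeneous {N : Type*} [AddCommGroup N] [Module k N]
    (S : YDOn k (resCocycle ω H) V) {f₁ f₂ : IndCarrier ω H S →ₗ[k] N}
    (h : ∀ g d, ∀ v ∈ S.grading d, f₁ (jgen ω H S g v) = f₂ (jgen ω H S g v)) : f₁ = f₂ :=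
  ind_hom_ext S S.span_homogeneous_eq_top fun g _ hv =>
    let ⟨d, hv⟩ := Set.mem_iUnion.1 hv; h g d _ hv

theorem ind_tensor_hom_ext {N : Type*} [AddCommGroup N] [Module k N]
    (S : YDOn k (resCocycle ω H) V) (S' : YDOn k (resCocycle ω H) W)
    {f₁ f₂ : IndCarrier ω H S ⊗[k] IndCarrier ω H S' →ₗ[k] N}
    (h : ∀ g g' d f, ∀ a ∈ S.grading d, ∀ b ∈ S'.grading f,
      f₁ (jgen ω H S g a ⊗ₜ[k] jgen ω H S' g' b) = f₂ (jgen ω H S g a ⊗ₜ[k] jgen ω H S' g' b)) :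
    f₁ = f₂ :=
  TensorProduct.ext <| ind_hom_ext_homogeneous S fun g d a ha =>
    ind_hom_ext_homogeneous S' fun g' f b hb => h g g' d f a ha b hb

variable {S : YDOn k (resCocycle ω H) V} {T : YDOn k ω (IndCarrier ω H S)}

theorem IsIndStruct.jgen_mem (hT : IsIndStruct ω H S T) (g : G) {e : ↥H} {v : V}
    (hv : v ∈ S.grading e) : jgen ω H S g v ∈ T.grading (g * ↑e * g⁻¹) := by
  rw [hT.1]
  exact Submodule.subset_span ⟨g, e, v, hv, rfl, rfl⟩

theorem IsIndStruct.act_conj_jgen (hT : IsIndStruct ω H S T) (g : G) (d : ↥H) {e : ↥H} {v : V}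
    (hv : v ∈ S.grading e) :
    T.act (g * ↑d * g⁻¹) (jgen ω H S g v)
      = ((tauc ω (g * ↑d * g⁻¹) g ↑e * (tauc ω g ↑d ↑e)⁻¹ : kˣ) : k)
          • jgen ω H S g (S.act d v) := by
  rw [hT.2 _ g e v hv, show g * ↑d * g⁻¹ * g = g * ↑d by group, jgen_mul_of_mem S g d e hv,
    smul_smul, Units.val_mul]

theorem IsIndMap.eq_of_isTwistMap (hT : IsIndStruct ω H S T) {θ : V →ₗ[k] V}
    (hθ : IsTwistMap S θ) {Θ : IndCarrier ω H S →ₗ[k] IndCarrier ω H S}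
    (hΘ : IsIndMap ω H S S θ Θ) {θI : IndCarrier ω H S →ₗ[k] IndCarrier ω H S}
    (hθI : IsTwistMap T θI) : Θ = θI :=
  ind_hom_ext_homogeneous S fun g d v hv => by
    rw [hΘ, hθ d v hv, hθI _ _ (hT.jgen_mem g hv), hT.act_conj_jgen g d hv, tauc_conj_self,
      mul_inv_cancel, Units.val_one, one_smul]

variable {SV : YDOn k (resCocycle ω H) V} {SW : YDOn k (resCocycle ω H) W}
  {TV : YDOn k ω (IndCarrier ω H SV)} {TW : YDOn k ω (IndCarrier ω H SW)}
  {cG : IndCarrier ω H SV ⊗[k] IndCarrier ω H SW →ₗ[k] IndCarrier ω H SW ⊗[k] IndCarrier ω H SV}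

theorem IsBraidingMap.apply_jgen_tmul_jgen (hcG : IsBraidingMap TV TW cG)
    (hTV : IsIndStruct ω H SV TV) (hTW : IsIndStruct ω H SW TW)
    (g : G) {d f : ↥H} {a : V} {b : W} (ha : a ∈ SV.grading d) (hb : b ∈ SW.grading f) :
    cG (jgen ω H SV g a ⊗ₜ[k] jgen ω H SW g b)
      = ((gamc ω g ↑(d * f * d⁻¹) ↑d * (gamc ω g ↑d ↑f)⁻¹ : kˣ) : k)
          • (jgen ω H SW g (SW.act d b) ⊗ₜ[k] jgen ω H SV g a) := by
  rw [hcG _ _ _ (hTV.jgen_mem g ha), hTW.act_conj_jgen g d hb, tauc_conj_mul_inv,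
    TensorProduct.smul_tmul']
  rfl

variable {SVW : YDOn k (resCocycle ω H) (V ⊗[k] W)}
  {SWV : YDOn k (resCocycle ω H) (W ⊗[k] V)}
  {cH : V ⊗[k] W →ₗ[k] W ⊗[k] V}
  {IcH : IndCarrier ω H SVW →ₗ[k] IndCarrier ω H SWV}

theorem IsMuMap.comp_braiding (hTV : IsIndStruct ω H SV TV) (hTW : IsIndStruct ω H SW TW)
    (hcH : IsBraidingMap SV SW cH) (hcG : IsBraidingMap TV TW cG)
    (hIcH : IsIndMap ω H SVW SWV cH IcH)
    {μVW : IndCarrier ω H SV ⊗[k] IndCarrier ω H SW →ₗ[k] IndCarrier ω H SVW}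
    (hμVW : IsMuMap ω H SV SW SVW μVW)
    {μWV : IndCarrier ω H SW ⊗[k] IndCarrier ω H SV →ₗ[k] IndCarrier ω H SWV}
    (hμWV : IsMuMap ω H SW SV SWV μWV) :
    μWV ∘ₗ cG = IcH ∘ₗ μVW := by
  have diagonal : ∀ (g : G) (d f : ↥H) (a : V) (b : W), a ∈ SV.grading d → b ∈ SW.grading f →
      μWV (cG (jgen ω H SV g a ⊗ₜ[k] jgen ω H SW g b))
        = IcH (μVW (jgen ω H SV g a ⊗ₜ[k] jgen ω H SW g b)) := by
    intro g d f a b ha hb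
    rw [hcG.apply_jgen_tmul_jgen hTV hTW g ha hb, map_smul,
      hμWV.2 g _ d _ a (SW.act_mem d f b hb) ha, hμVW.2 g d f a b ha hb, map_smul, hIcH,
      hcH d a b ha, smul_smul, ← Units.val_mul, mul_inv_cancel_comm]
  refine ind_tensor_hom_ext SV SW fun g g' d f a ha b hb => ?_
  simp only [LinearMap.comp_apply]
  by_cases hcos : g⁻¹ * g' ∈ H
  · obtain ⟨h, rfl⟩ : ∃ h : ↥H, g' = g * ↑h := ⟨⟨_, hcos⟩, by simp⟩
    rw [jgen_mul_of_mem SW g h f hb, TensorProduct.tmul_smul, map_smul, map_smul, map_smul,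
      map_smul, diagonal g d _ a _ ha (SW.act_mem h f b hb)]
  · have hcos' : (g * ↑d * g⁻¹ * g')⁻¹ * g ∉ H := by
      rwa [show (g * ↑d * g⁻¹ * g')⁻¹ * g = (g⁻¹ * g')⁻¹ * (↑d)⁻¹ by group,
        H.mul_mem_cancel_right (H.inv_mem d.2), H.inv_mem_iff]
    rw [hμVW.1 g g' hcos, map_zero, hcG _ _ _ (hTV.jgen_mem g ha), hTW.2 _ g' f b hb,
      ← TensorProduct.smul_tmul', map_smul, hμWV.1 _ _ hcos', smul_zero]

theorem IsNuMap.braiding_comp (hTV : IsIndStruct ω H SV TV) (hTW : IsIndStruct ω H SW TW)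
    (hcH : IsBraidingMap SV SW cH) (hcG : IsBraidingMap TV TW cG)
    (hIcH : IsIndMap ω H SVW SWV cH IcH)
    {νVW : IndCarrier ω H SVW →ₗ[k] IndCarrier ω H SV ⊗[k] IndCarrier ω H SW}
    (hνVW : IsNuMap ω H SV SW SVW νVW)
    {νWV : IndCarrier ω H SWV →ₗ[k] IndCarrier ω H SW ⊗[k] IndCarrier ω H SV}
    (hνWV : IsNuMap ω H SW SV SWV νWV) :
    cG ∘ₗ νVW = νWV ∘ₗ IcH := by
  refine ind_hom_ext SVW (SV.span_tmul_homogeneous_eq_top SW) ?_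
  rintro g _ ⟨d, f, a, b, ha, hb, rfl⟩
  rw [LinearMap.comp_apply, LinearMap.comp_apply, hνVW g d f a b ha hb, map_smul,
    hcG.apply_jgen_tmul_jgen hTV hTW g ha hb, hIcH, hcH d a b ha,
    hνWV g _ d _ a (SW.act_mem d f b hb) ha, smul_smul, ← Units.val_mul, mul_comm,
    inv_mul_cancel_right]

end Induction

end DW

open DW

theorem induction_braided_ribbon_general {k : Type*} [Field k] {G : Type*}
    [Group G] [DecidableEq G] (ω : G → G → G → kˣ)
    (H : Subgroup G) :
    -- braided lax and braided oplax compatibility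
    (∀ (V W : Type) [AddCommGroup V] [Module k V] [AddCommGroup W] [Module k W]
        (SV : YDOn k (resCocycle ω H) V) (SW : YDOn k (resCocycle ω H) W)
        (SVW : YDOn k (resCocycle ω H) (V ⊗[k] W)) (_ : IsTensorStruct SV SW SVW)
        (SWV : YDOn k (resCocycle ω H) (W ⊗[k] V)) (_ : IsTensorStruct SW SV SWV)
        (cH : V ⊗[k] W →ₗ[k] W ⊗[k] V) (_ : IsBraidingMap SV SW cH)
        (TV : YDOn k ω (IndCarrier ω H SV)) (_ : IsIndStruct ω H SV TV)
        (TW : YDOn k ω (IndCarrier ω H SW)) (_ : IsIndStruct ω H SW TW)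
        (cG : IndCarrier ω H SV ⊗[k] IndCarrier ω H SW →ₗ[k]
            IndCarrier ω H SW ⊗[k] IndCarrier ω H SV) (_ : IsBraidingMap TV TW cG)
        (IcH : IndCarrier ω H SVW →ₗ[k] IndCarrier ω H SWV)
        (_ : IsIndMap ω H SVW SWV cH IcH)
        (μVW : IndCarrier ω H SV ⊗[k] IndCarrier ω H SW →ₗ[k] IndCarrier ω H SVW)
        (_ : IsMuMap ω H SV SW SVW μVW)
        (μWV : IndCarrier ω H SW ⊗[k] IndCarrier ω H SV →ₗ[k] IndCarrier ω H SWV)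
        (_ : IsMuMap ω H SW SV SWV μWV)
        (νVW : IndCarrier ω H SVW →ₗ[k] IndCarrier ω H SV ⊗[k] IndCarrier ω H SW)
        (_ : IsNuMap ω H SV SW SVW νVW)
        (νWV : IndCarrier ω H SWV →ₗ[k] IndCarrier ω H SW ⊗[k] IndCarrier ω H SV),
        IsNuMap ω H SW SV SWV νWV →
        -- braided lax monoidal
        μWV ∘ₗ cG = IcH ∘ₗ μVW ∧
        -- braided oplax monoidal
        cG ∘ₗ νVW = νWV ∘ₗ IcH) ∧
    -- the ribbon twist is preserved: I(θ_V) = θ_{I(V)}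
    (∀ (V : Type) [AddCommGroup V] [Module k V]
        (SV : YDOn k (resCocycle ω H) V)
        (TV : YDOn k ω (IndCarrier ω H SV)) (_ : IsIndStruct ω H SV TV)
        (θV : V →ₗ[k] V) (_ : IsTwistMap SV θV)
        (ΘV : IndCarrier ω H SV →ₗ[k] IndCarrier ω H SV)
        (_ : IsIndMap ω H SV SV θV ΘV)
        (θI : IndCarrier ω H SV →ₗ[k] IndCarrier ω H SV),
        IsTwistMap TV θI → ΘV = θI) := by
  refine ⟨fun V W _ _ _ _ SV SW SVW _ SWV _ cH hcH TV hTV TW hTW cG hcG IcH hIcH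
      μVW hμVW μWV hμWV νVW hνVW νWV hνWV => ⟨?_, ?_⟩, ?_⟩
  · exact hμVW.comp_braiding hTV hTW hcH hcG hIcH hμWV
  · exact hνVW.braiding_comp hTV hTW hcH hcG hIcH hνWV
  · intro V _ _ SV TV hTV θV hθ ΘV hΘ θI hθI
    exact hΘ.eq_of_isTwistMap hTV hθ hθI

/-- Proposition 3.11: the induction functor `I : Z(Vect_H^ω) → Z(Vect_G^ω)`
is both a braided lax and a braided oplax monoidal functor:
`μ_{W,V} ∘ c_{I(V),I(W)} = I(c_{V,W}) ∘ μ_{V,W}` and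
`c_{I(V),I(W)} ∘ ν_{V,W} = ν_{W,V} ∘ I(c_{V,W})`; moreover `I` preserves the ribbon twist
`θ_V(v_d) = d·v_d`, i.e. `I(θ_V) = θ_{I(V)}`. -/
theorem induction_braided_ribbon {k : Type*} [Field k] [IsAlgClosed k] {G : Type*}
    [Group G] [Finite G] [DecidableEq G] (ω : G → G → G → kˣ)
    (hω : IsCocycle ω) (hnorm : IsNormalized ω) (H : Subgroup G) :
    -- braided lax and braided oplax compatibility
    (∀ (V W : Type) [AddCommGroup V] [Module k V] [AddCommGroup W] [Module k W]
        (SV : YDOn k (resCocycle ω H) V) (SW : YDOn k (resCocycle ω H) W)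
        (SVW : YDOn k (resCocycle ω H) (V ⊗[k] W)) (_ : IsTensorStruct SV SW SVW)
        (SWV : YDOn k (resCocycle ω H) (W ⊗[k] V)) (_ : IsTensorStruct SW SV SWV)
        (cH : V ⊗[k] W →ₗ[k] W ⊗[k] V) (_ : IsBraidingMap SV SW cH)
        (TV : YDOn k ω (IndCarrier ω H SV)) (_ : IsIndStruct ω H SV TV)
        (TW : YDOn k ω (IndCarrier ω H SW)) (_ : IsIndStruct ω H SW TW)
        (cG : IndCarrier ω H SV ⊗[k] IndCarrier ω H SW →ₗ[k]
            IndCarrier ω H SW ⊗[k] IndCarrier ω H SV) (_ : IsBraidingMap TV TW cG)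
        (IcH : IndCarrier ω H SVW →ₗ[k] IndCarrier ω H SWV)
        (_ : IsIndMap ω H SVW SWV cH IcH)
        (μVW : IndCarrier ω H SV ⊗[k] IndCarrier ω H SW →ₗ[k] IndCarrier ω H SVW)
        (_ : IsMuMap ω H SV SW SVW μVW)
        (μWV : IndCarrier ω H SW ⊗[k] IndCarrier ω H SV →ₗ[k] IndCarrier ω H SWV)
        (_ : IsMuMap ω H SW SV SWV μWV)
        (νVW : IndCarrier ω H SVW →ₗ[k] IndCarrier ω H SV ⊗[k] IndCarrier ω H SW)
        (_ : IsNuMap ω H SV SW SVW νVW)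
        (νWV : IndCarrier ω H SWV →ₗ[k] IndCarrier ω H SW ⊗[k] IndCarrier ω H SV),
        IsNuMap ω H SW SV SWV νWV →
        -- braided lax monoidal
        μWV ∘ₗ cG = IcH ∘ₗ μVW ∧
        -- braided oplax monoidal
        cG ∘ₗ νVW = νWV ∘ₗ IcH) ∧
    -- the ribbon twist is preserved: I(θ_V) = θ_{I(V)}
    (∀ (V : Type) [AddCommGroup V] [Module k V]
        (SV : YDOn k (resCocycle ω H) V)
        (TV : YDOn k ω (IndCarrier ω H SV)) (_ : IsIndStruct ω H SV TV)
        (θV : V →ₗ[k] V) (_ : IsTwistMap SV θV)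
        (ΘV : IndCarrier ω H SV →ₗ[k] IndCarrier ω H SV)
        (_ : IsIndMap ω H SV SV θV ΘV)
        (θI : IndCarrier ω H SV →ₗ[k] IndCarrier ω H SV),
        IsTwistMap TV θI → ΘV = θI) :=
  induction_braided_ribbon_general ω H
end

section
/- Given classification data (H, N, ω, κ, ε), the object B(N,κ,ε) is a connected commutative algebra in Z(Vect_H^ω); if moreover |N| is invertible in k, then B(N,κ,ε) is a rigid Frobenius algebra, with comultiplication Δ(e_n) = Σ_{m∈N} κ(m,m⁻¹n)·e_m⊗e_{m⁻¹n} and counit ε_B(e_n) = δ_{n,1}, satisfying m∘Δ = |N|·id and ε_B(1_B) = 1. -/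
open scoped TensorProduct

open DW

/-! `B(N,κ,ε)` is a twisted group algebra of `N`, so every structure map sends basis tensors
to scalar multiples of basis tensors, and each axiom reduces to an identity between scalars.
The conditions on `(κ, ε)` are exactly these identities: `dκ = ω|_N` gives associativity,
coassociativity and both Frobenius relations; the `τ`- and `γ`-conditions on `ε` make the
action twisted and the (co)multiplication equivariant; and `κ(nmn⁻¹,n) = ε_n(m)κ(n,m)` is
commutativity against the braiding. Normalization of `ω` forces `ε_1 = 1` and `ε_h(1) = 1`,
so the action is unital and fixes the unit `e_1`, which spans the invariants of degree `1`.
Finally `m(Δ(e_n)) = ∑_m κ(m,m⁻¹n)κ(m,m⁻¹n)⁻¹ e_n = |N| e_n`. -/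

theorem Finsupp.isInternal_supported_preimage_singleton {α ι R : Type*} [Ring R]
    [DecidableEq ι] (f : α → ι) :
    DirectSum.IsInternal fun i => Finsupp.supported R R (f ⁻¹' {i}) := by
  refine DirectSum.isInternal_submodule_of_iSupIndep_of_iSup_eq_top (fun i => ?_) ?_
  · refine (Finsupp.disjoint_supported_supported (t := (f ⁻¹' {i})ᶜ)
      disjoint_compl_right).mono_right ?_
    exact iSup₂_le fun j hj => Finsupp.supported_mono fun a (ha : f a = j) (hai : f a = i) =>
      hj (ha.symm.trans hai)
  · rw [← Finsupp.supported_iUnion, ← Set.preimage_iUnion, Set.iUnion_of_singleton,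
      Set.preimage_univ, Finsupp.supported_univ]

namespace DW

section Cocycle

variable {G : Type*} [Group G] {M : Type*} [CommGroup M] {ω : G → G → G → M}

theorem IsNormalized.tauc_one_one (hω : IsNormalized ω) (d : G) : tauc ω 1 1 d = 1 := by
  simp [tauc, hω 1 1 d (.inl rfl), hω d 1 1 (.inr (.inl rfl)), hω 1 d 1 (.inl rfl)]

theorem IsNormalized.gamc_one_one (hω : IsNormalized ω) (h : G) : gamc ω h 1 1 = 1 := by
  simp [gamc, hω h 1 1 (.inr (.inl rfl)), hω 1 1 h (.inl rfl), hω 1 h 1 (.inl rfl)]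

end Cocycle

namespace ClassData

variable {H : Type*} [Group H] {M : Type*} [CommGroup M] {ω : H → H → H → M} {N : Subgroup H}
  {κ ε : H → H → M} {n m l : H}

theorem kappa_one_right (hd : ClassData ω N κ ε) (hn : n ∈ N) : κ n 1 = 1 := (hd.1 n hn).1

theorem kappa_one_left (hd : ClassData ω N κ ε) (hn : n ∈ N) : κ 1 n = 1 := (hd.1 n hn).2

theorem cocycle_eq_coboundary (hd : ClassData ω N κ ε) (hn : n ∈ N) (hm : m ∈ N) (hl : l ∈ N) :
    ω n m l = κ n m * (κ m l)⁻¹ * κ (n * m) l * (κ n (m * l))⁻¹ :=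
  hd.2.1 n hn m hm l hl

theorem tauc_eq (hd : ClassData ω N κ ε) (h g : H) (hn : n ∈ N) :
    tauc ω h g n = ε h (g * n * g⁻¹) * ε g n * (ε (h * g) n)⁻¹ :=
  hd.2.2.1 h g n hn

theorem gamc_eq (hd : ClassData ω N κ ε) (h : H) (hn : n ∈ N) (hm : m ∈ N) :
    gamc ω h n m
      = ε h (n * m) * (ε h n)⁻¹ * (ε h m)⁻¹ * κ (h * n * h⁻¹) (h * m * h⁻¹) * (κ n m)⁻¹ :=
  hd.2.2.2.1 h n hn m hm

theorem kappa_conj (hd : ClassData ω N κ ε) (hn : n ∈ N) (hm : m ∈ N) :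
    κ (n * m * n⁻¹) n = ε n m * κ n m :=
  hd.2.2.2.2 n hn m hm

theorem eps_one_left (hd : ClassData ω N κ ε) (hω : IsNormalized ω) (hn : n ∈ N) :
    ε 1 n = 1 := by
  simpa [hω.tauc_one_one] using (hd.tauc_eq 1 1 hn).symm

theorem eps_apply_one (hd : ClassData ω N κ ε) (hω : IsNormalized ω) (h : H) : ε h 1 = 1 := by
  simpa [hω.gamc_one_one] using (hd.gamc_eq h N.one_mem N.one_mem).symm

end ClassData

open Finsupp Submodule

section TwistedGroupAlgebra

variable {k : Type*} [Field k] {H : Type*} [Group H] (N : Subgroup H)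

theorem linearCombination_bGen {M : Type*} [AddCommMonoid M] [Module k M] (v : ↥N → M)
    (n : ↥N) : linearCombination k v (bGen k N n) = v n := by
  simp [bGen]

theorem bGen_ne_zero (n : ↥N) : bGen k N n ≠ 0 :=
  single_ne_zero.2 one_ne_zero

variable {N}

theorem linearMap_ext_bGen {P : Type*} [AddCommMonoid P] [Module k P]
    {f g : (↥N →₀ k) →ₗ[k] P} (h : ∀ n, f (bGen k N n) = g (bGen k N n)) : f = g :=
  Finsupp.basisSingleOne.ext h

theorem tensor_ext_bGen {P : Type*} [AddCommMonoid P] [Module k P]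
    {f g : (↥N →₀ k) ⊗[k] (↥N →₀ k) →ₗ[k] P}
    (h : ∀ n m, f (bGen k N n ⊗ₜ bGen k N m) = g (bGen k N n ⊗ₜ bGen k N m)) : f = g :=
  TensorProduct.ext <| linearMap_ext_bGen fun n => linearMap_ext_bGen fun m => h n m

theorem tensor_ext_bGen₃ {P : Type*} [AddCommMonoid P] [Module k P]
    {f g : ((↥N →₀ k) ⊗[k] (↥N →₀ k)) ⊗[k] (↥N →₀ k) →ₗ[k] P}
    (h : ∀ n m l, f ((bGen k N n ⊗ₜ bGen k N m) ⊗ₜ bGen k N l)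
      = g ((bGen k N n ⊗ₜ bGen k N m) ⊗ₜ bGen k N l)) : f = g :=
  TensorProduct.ext <| tensor_ext_bGen fun n m => linearMap_ext_bGen fun l => h n m l

variable (k N)

def bGrading (d : H) : Submodule k (↥N →₀ k) := supported k k (((↑) : ↥N → H) ⁻¹' {d})

theorem bGrading_isInternal [DecidableEq H] : DirectSum.IsInternal (bGrading k N) :=
  isInternal_supported_preimage_singleton _

theorem bGrading_eq_span (d : H) :
    bGrading k N d = span k {x | ∃ n : ↥N, ↑n = d ∧ x = bGen k N n} := by
  rw [bGrading, supported_eq_span_single]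
  congr 1
  ext x
  exact ⟨fun ⟨n, hn, hx⟩ => ⟨n, hn, hx.symm⟩, fun ⟨n, hn, hx⟩ => ⟨n, hn, hx.symm⟩⟩

theorem bGrading_coe (n : ↥N) : bGrading k N n = k ∙ bGen k N n := by
  rw [bGrading_eq_span]
  congr 1
  ext x
  exact ⟨fun ⟨m, hm, hx⟩ => hx.trans (congrArg _ (Subtype.ext hm)), fun hx => ⟨n, rfl, hx⟩⟩

theorem bGen_mem_bGrading (n : ↥N) : bGen k N n ∈ bGrading k N n :=
  single_mem_supported k 1 rfl

variable {k N}

theorem bGrading_le {P : Submodule k (↥N →₀ k)} {d : H}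
    (h : ∀ n : ↥N, (n : H) = d → bGen k N n ∈ P) : bGrading k N d ≤ P := by
  rw [bGrading_eq_span, span_le]
  rintro _ ⟨n, rfl, rfl⟩
  exact h n rfl

variable {ω : H → H → H → kˣ} {κ ε : H → H → kˣ}

variable (N κ) in
noncomputable def bMul : (↥N →₀ k) ⊗[k] (↥N →₀ k) →ₗ[k] (↥N →₀ k) :=
  TensorProduct.lift <| linearCombination k fun n =>
    linearCombination k fun m => (((κ n m)⁻¹ : kˣ) : k) • bGen k N (n * m)

theorem bMul_bGen (n m : ↥N) :
    bMul N κ (bGen k N n ⊗ₜ bGen k N m) = (((κ n m)⁻¹ : kˣ) : k) • bGen k N (n * m) := by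
  rw [bMul, TensorProduct.lift.tmul, linearCombination_bGen, linearCombination_bGen]

theorem bMul_bGen_one_left (hd : ClassData ω N κ ε) (x : ↥N →₀ k) :
    bMul N κ (bGen k N 1 ⊗ₜ x) = x := by
  suffices bMul N κ ∘ₗ TensorProduct.mk k _ _ (bGen k N 1) = LinearMap.id from
    LinearMap.congr_fun this x
  exact linearMap_ext_bGen fun n => by simp [bMul_bGen, hd.kappa_one_left n.2]

theorem bMul_bGen_one_right (hd : ClassData ω N κ ε) (x : ↥N →₀ k) :
    bMul N κ (x ⊗ₜ bGen k N 1) = x := by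
  suffices bMul N κ ∘ₗ (TensorProduct.mk k _ _).flip (bGen k N 1) = LinearMap.id from
    LinearMap.congr_fun this x
  exact linearMap_ext_bGen fun n => by simp [bMul_bGen, hd.kappa_one_right n.2]

variable (N) in
noncomputable def bCounit : (↥N →₀ k) →ₗ[k] k := lapply 1

theorem bCounit_bGen [DecidableEq ↥N] (n : ↥N) :
    bCounit N (bGen k N n) = if n = 1 then 1 else 0 := by
  simp [bCounit, bGen, single_apply]

variable [Fintype ↥N]

variable (N κ) in
noncomputable def bComul : (↥N →₀ k) →ₗ[k] (↥N →₀ k) ⊗[k] (↥N →₀ k) :=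
  linearCombination k fun n =>
    ∑ m : ↥N, ((κ ↑m (↑m⁻¹ * ↑n) : kˣ) : k) • (bGen k N m ⊗ₜ bGen k N (m⁻¹ * n))

theorem bComul_bGen (n : ↥N) :
    bComul N κ (bGen k N n)
      = ∑ m : ↥N, ((κ ↑m (↑m⁻¹ * ↑n) : kˣ) : k) • (bGen k N m ⊗ₜ bGen k N (m⁻¹ * n)) :=
  linearCombination_bGen N _ n

theorem lid_comp_bCounit_comp_bComul (hd : ClassData ω N κ ε) :
    (TensorProduct.lid k (↥N →₀ k)).toLinearMap
      ∘ₗ TensorProduct.map (bCounit N) LinearMap.id ∘ₗ bComul N κ = LinearMap.id := by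
  classical
  refine linearMap_ext_bGen fun n => ?_
  simp [bComul_bGen, bCounit_bGen, hd.kappa_one_left n.2]

theorem rid_comp_bCounit_comp_bComul (hd : ClassData ω N κ ε) :
    (TensorProduct.rid k (↥N →₀ k)).toLinearMap
      ∘ₗ TensorProduct.map LinearMap.id (bCounit N) ∘ₗ bComul N κ = LinearMap.id := by
  classical
  refine linearMap_ext_bGen fun n => ?_
  simp [bComul_bGen, bCounit_bGen, inv_mul_eq_one, hd.kappa_one_right n.2]

theorem bMul_comp_bComul : bMul N κ ∘ₗ bComul N κ = (Nat.card ↥N : k) • LinearMap.id := by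
  refine linearMap_ext_bGen fun n => ?_
  simp [bComul_bGen, bMul_bGen, smul_smul, Finset.card_univ, Nat.card_eq_fintype_card,
    Nat.cast_smul_eq_nsmul]

end TwistedGroupAlgebra

section YetterDrinfeld

variable {k : Type*} [Field k] {H : Type*} [Group H] {N : Subgroup H} [hN : N.Normal]
  {ω : H → H → H → kˣ} {κ ε : H → H → kˣ}

variable (N ε) in
noncomputable def bAct (h : H) : (↥N →₀ k) →ₗ[k] (↥N →₀ k) :=
  linearCombination k fun n => (ε h n : k) • bGen k N (MulAut.conjNormal h n)

theorem bAct_bGen (h : H) (n : ↥N) :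
    bAct N ε h (bGen k N n) = (ε h n : k) • bGen k N (MulAut.conjNormal h n) :=
  linearCombination_bGen N _ n

theorem bAct_one (hd : ClassData ω N κ ε) (hω : IsNormalized ω) : bAct N ε 1 = LinearMap.id :=
  linearMap_ext_bGen fun n => by simp [bAct_bGen, hd.eps_one_left hω n.2]

theorem bAct_bAct (hd : ClassData ω N κ ε) (h g : H) (n : ↥N) :
    bAct N ε h (bAct N ε g (bGen k N n))
      = ((tauc ω h g n : kˣ) : k) • bAct N ε (h * g) (bGen k N n) := by
  simp only [bAct_bGen, map_smul, smul_smul, map_mul, MulAut.mul_apply, MulAut.conjNormal_apply]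
  congr 1
  rw [hd.tauc_eq h g n.2]
  push_cast
  field_simp

variable [DecidableEq H]

variable (N ε) in
noncomputable def bYD (hd : ClassData ω N κ ε) (hω : IsNormalized ω) : YDOn k ω (↥N →₀ k) where
  grading := bGrading k N
  internal := bGrading_isInternal k N
  act := bAct N ε
  act_one := bAct_one hd hω
  act_mem g d v hv := bGrading_le (P := comap (bAct N ε g) (bGrading k N (g * d * g⁻¹)))
    (fun n hn => by
      rw [mem_comap, bAct_bGen, ← hn, ← MulAut.conjNormal_apply]
      exact smul_mem _ _ (bGen_mem_bGrading k N _)) hv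
  act_act h g d v hv := bGrading_le (P := LinearMap.eqLocus (bAct N ε h ∘ₗ bAct N ε g)
      (((tauc ω h g d : kˣ) : k) • bAct N ε (h * g)))
    (fun n hn => by subst hn; exact bAct_bAct hd h g n) hv

theorem bYD_isBStruct (hd : ClassData ω N κ ε) (hω : IsNormalized ω) :
    IsBStruct ω N hN ε (bYD N ε hd hω) :=
  ⟨fun d => bGrading_eq_span k N d, fun h n => bAct_bGen h n⟩

variable {S : YDOn k ω (↥N →₀ k)}

theorem IsBStruct.grading_eq (hS : IsBStruct ω N hN ε S) : S.grading = bGrading k N :=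
  funext fun d => (hS.1 d).trans (bGrading_eq_span k N d).symm

theorem IsBStruct.bGen_mem (hS : IsBStruct ω N hN ε S) (n : ↥N) : bGen k N n ∈ S.grading n := by
  rw [hS.grading_eq]
  exact bGen_mem_bGrading k N n

theorem IsBStruct.act_bGen (hS : IsBStruct ω N hN ε S) (h : H) (n : ↥N) :
    S.act h (bGen k N n) = (ε h n : k) • bGen k N (MulAut.conjNormal h n) :=
  hS.2 h n

variable {T : YDOn k ω ((↥N →₀ k) ⊗[k] (↥N →₀ k))}

theorem IsTensorStruct.bGen_tmul_mem (hS : IsBStruct ω N hN ε S) (hT : IsTensorStruct S S T)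
    (n m : ↥N) : bGen k N n ⊗ₜ bGen k N m ∈ T.grading (n * m) := by
  rw [hT.1]
  refine le_iSup (fun a : H => map₂ (TensorProduct.mk k _ _) (S.grading a)
    (S.grading (a⁻¹ * (n * m)))) (n : H) (apply_mem_map₂ _ (hS.bGen_mem n) ?_)
  rw [inv_mul_cancel_left]
  exact hS.bGen_mem m

theorem IsTensorStruct.grading_le (hS : IsBStruct ω N hN ε S) (hT : IsTensorStruct S S T)
    {P : Submodule k ((↥N →₀ k) ⊗[k] (↥N →₀ k))} {d : H}
    (h : ∀ n m : ↥N, (n : H) * m = d → bGen k N n ⊗ₜ bGen k N m ∈ P) : T.grading d ≤ P := by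
  rw [hT.1]
  refine iSup_le fun a => ?_
  rw [hS.1, hS.1, map₂_span_span, span_le]
  rintro _ ⟨_, ⟨n, rfl, rfl⟩, _, ⟨m, hm, rfl⟩, rfl⟩
  exact h n m (by rw [hm, mul_inv_cancel_left])

theorem IsTensorStruct.act_bGen_tmul (hS : IsBStruct ω N hN ε S) (hT : IsTensorStruct S S T)
    (g : H) (n m : ↥N) :
    T.act g (bGen k N n ⊗ₜ bGen k N m)
      = ((gamc ω g n m * ε g n * ε g m : kˣ) : k)
          • (bGen k N (MulAut.conjNormal g n) ⊗ₜ bGen k N (MulAut.conjNormal g m)) := by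
  rw [hT.2 g n m _ _ (hS.bGen_mem n) (hS.bGen_mem m), hS.act_bGen, hS.act_bGen,
    TensorProduct.smul_tmul_smul, smul_smul, Units.val_mul, Units.val_mul, mul_assoc]

theorem bMul_isYDHom (hd : ClassData ω N κ ε) (hS : IsBStruct ω N hN ε S)
    (hT : IsTensorStruct S S T) : IsYDHom T S (bMul N κ) := by
  refine ⟨fun d => hT.grading_le hS (P := comap (bMul N κ) (S.grading d)) fun n m hnm => ?_,
    fun g => tensor_ext_bGen fun n m => ?_⟩
  · rw [mem_comap, bMul_bGen, ← hnm]
    exact smul_mem _ _ (hS.bGen_mem (n * m))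
  · simp only [LinearMap.comp_apply, hT.act_bGen_tmul hS, map_smul, bMul_bGen, hS.act_bGen,
      smul_smul, map_mul, MulAut.conjNormal_apply]
    congr 1
    rw [hd.gamc_eq g n.2 m.2]
    push_cast
    field_simp

theorem bMul_assoc (hd : ClassData ω N κ ε) (hS : IsBStruct ω N hN ε S)
    {a : ((↥N →₀ k) ⊗[k] (↥N →₀ k)) ⊗[k] (↥N →₀ k)
      →ₗ[k] (↥N →₀ k) ⊗[k] ((↥N →₀ k) ⊗[k] (↥N →₀ k))}
    (ha : IsAssocMap S S S a) :
    bMul N κ ∘ₗ TensorProduct.map (bMul N κ) LinearMap.id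
      = bMul N κ ∘ₗ TensorProduct.map LinearMap.id (bMul N κ) ∘ₗ a := by
  refine tensor_ext_bGen₃ fun n m l => ?_
  simp only [LinearMap.comp_apply, TensorProduct.map_tmul, LinearMap.id_apply,
    ha n m l _ _ _ (hS.bGen_mem n) (hS.bGen_mem m) (hS.bGen_mem l), bMul_bGen, map_smul,
    ← TensorProduct.smul_tmul', TensorProduct.tmul_smul, smul_smul, mul_assoc]
  congr 1
  rw [hd.cocycle_eq_coboundary n.2 m.2 l.2]
  push_cast
  field_simp

theorem bMul_comp_braiding (hd : ClassData ω N κ ε) (hS : IsBStruct ω N hN ε S)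
    {c : (↥N →₀ k) ⊗[k] (↥N →₀ k) →ₗ[k] (↥N →₀ k) ⊗[k] (↥N →₀ k)} (hc : IsBraidingMap S S c) :
    bMul N κ ∘ₗ c = bMul N κ := by
  refine tensor_ext_bGen fun n m => ?_
  have hconj : MulAut.conjNormal (n : H) m * n = n * m := Subtype.ext (by simp)
  simp only [LinearMap.comp_apply, hc n _ _ (hS.bGen_mem n), hS.act_bGen,
    ← TensorProduct.smul_tmul', map_smul, bMul_bGen, smul_smul, hconj]
  congr 1
  rw [MulAut.conjNormal_apply, hd.kappa_conj n.2 m.2]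
  push_cast
  field_simp

theorem IsBStruct.act_bGen_one (hS : IsBStruct ω N hN ε S) (hd : ClassData ω N κ ε)
    (hω : IsNormalized ω) (h : H) : S.act h (bGen k N 1) = bGen k N 1 := by
  simp [hS.act_bGen, hd.eps_apply_one hω]

theorem finrank_invariants_eq_one (hd : ClassData ω N κ ε) (hω : IsNormalized ω)
    (hS : IsBStruct ω N hN ε S) :
    Module.finrank k ↥(S.grading 1 ⊓ ⨅ h : H,
      LinearMap.eqLocus (S.act h) (LinearMap.id : (↥N →₀ k) →ₗ[k] _)) = 1 := by
  have hgr : S.grading 1 = k ∙ bGen k N 1 := by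
    rw [hS.grading_eq, ← bGrading_coe, OneMemClass.coe_one]
  have hinv : S.grading 1 ≤ ⨅ h : H, LinearMap.eqLocus (S.act h) LinearMap.id := by
    rw [hgr, span_singleton_le_iff_mem, mem_iInf]
    exact hS.act_bGen_one hd hω
  rw [inf_eq_left.2 hinv, hgr, finrank_span_singleton (bGen_ne_zero N 1)]

theorem bCounit_comp_act (hd : ClassData ω N κ ε) (hω : IsNormalized ω)
    (hS : IsBStruct ω N hN ε S) (h : H) : bCounit N ∘ₗ S.act h = bCounit N := by
  classical
  refine linearMap_ext_bGen fun n => ?_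
  obtain rfl | hn := eq_or_ne n 1
  · simp [hS.act_bGen, bCounit_bGen, hd.eps_apply_one hω]
  · simp [hS.act_bGen, bCounit_bGen, hn]

theorem bCounit_eq_zero (hS : IsBStruct ω N hN ε S) {d : H} (hd : d ≠ 1) {v : ↥N →₀ k}
    (hv : v ∈ S.grading d) : bCounit N v = 0 := by
  classical
  rw [hS.grading_eq] at hv
  refine bGrading_le (P := LinearMap.ker (bCounit N)) (fun n hn => ?_) hv
  rw [LinearMap.mem_ker, bCounit_bGen, if_neg]
  rintro rfl
  exact hd hn.symm

variable [Fintype ↥N]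

theorem bComul_isYDHom (hd : ClassData ω N κ ε) (hS : IsBStruct ω N hN ε S)
    (hT : IsTensorStruct S S T) : IsYDHom S T (bComul N κ) := by
  refine ⟨fun d => ?_, fun g => linearMap_ext_bGen fun n => ?_⟩
  · rw [hS.grading_eq]
    refine bGrading_le (P := comap (bComul N κ) (T.grading d)) fun n hn => ?_
    rw [mem_comap, bComul_bGen, ← hn]
    refine sum_mem fun m _ => smul_mem _ _ ?_
    simpa using hT.bGen_tmul_mem hS m (m⁻¹ * n)
  · simp only [LinearMap.comp_apply, hS.act_bGen, map_smul, bComul_bGen, map_sum,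
      hT.act_bGen_tmul hS, smul_smul, Finset.smul_sum]
    refine (Fintype.sum_equiv (MulAut.conjNormal g).toEquiv _ _ fun m => ?_).symm
    rw [MulEquiv.toEquiv_eq_coe, EquivLike.coe_coe, ← map_inv, ← map_mul]
    congr 1
    have hconj : g * (↑m)⁻¹ * g⁻¹ * (g * ↑n * g⁻¹) = g * ((↑m)⁻¹ * ↑n) * g⁻¹ := by group
    push_cast [MulAut.conjNormal_apply]
    rw [hd.gamc_eq g m.2 (mul_mem (inv_mem m.2) n.2), mul_inv_cancel_left, hconj]
    push_cast
    field_simp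

theorem bComul_coassoc (hd : ClassData ω N κ ε) (hS : IsBStruct ω N hN ε S)
    {a : ((↥N →₀ k) ⊗[k] (↥N →₀ k)) ⊗[k] (↥N →₀ k)
      →ₗ[k] (↥N →₀ k) ⊗[k] ((↥N →₀ k) ⊗[k] (↥N →₀ k))}
    (ha : IsAssocMap S S S a) :
    a ∘ₗ TensorProduct.map (bComul N κ) LinearMap.id ∘ₗ bComul N κ
      = TensorProduct.map LinearMap.id (bComul N κ) ∘ₗ bComul N κ := by
  refine linearMap_ext_bGen fun n => ?_
  have ha' (l m : ↥N) := ha l ↑(l⁻¹ * m) ↑(m⁻¹ * n) _ _ _ (hS.bGen_mem l) (hS.bGen_mem _)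
    (hS.bGen_mem _)
  simp only [LinearMap.comp_apply, bComul_bGen, map_sum, map_smul, TensorProduct.map_tmul,
    LinearMap.id_apply, TensorProduct.sum_tmul, TensorProduct.tmul_sum,
    ← TensorProduct.smul_tmul', TensorProduct.tmul_smul, ha', smul_smul, Finset.smul_sum]
  rw [Finset.sum_comm]
  refine Finset.sum_congr rfl fun l _ => ?_
  refine (Fintype.sum_equiv (Equiv.mulLeft l) _ _ fun m => ?_).symm
  rw [Equiv.coe_mulLeft, inv_mul_cancel_left, show (l * m)⁻¹ * n = m⁻¹ * (l⁻¹ * n) by group]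
  congr 1
  push_cast
  rw [hd.cocycle_eq_coboundary l.2 m.2 (mul_mem (inv_mem m.2) (mul_mem (inv_mem l.2) n.2))]
  push_cast [mul_inv_rev, mul_assoc, inv_mul_cancel_left, mul_inv_cancel_left]
  field_simp

theorem bComul_comp_bMul_eq_of_isAssocInvMap (hd : ClassData ω N κ ε)
    (hS : IsBStruct ω N hN ε S)
    {a : (↥N →₀ k) ⊗[k] ((↥N →₀ k) ⊗[k] (↥N →₀ k))
      →ₗ[k] ((↥N →₀ k) ⊗[k] (↥N →₀ k)) ⊗[k] (↥N →₀ k)}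
    (ha : IsAssocInvMap S S S a) :
    bComul N κ ∘ₗ bMul N κ
      = TensorProduct.map (bMul N κ) LinearMap.id ∘ₗ a
          ∘ₗ TensorProduct.map LinearMap.id (bComul N κ) := by
  refine tensor_ext_bGen fun n p => ?_
  have ha' (m : ↥N) := ha n m ↑(m⁻¹ * p) _ _ _ (hS.bGen_mem n) (hS.bGen_mem m) (hS.bGen_mem _)
  simp only [LinearMap.comp_apply, bComul_bGen, bMul_bGen, map_sum, map_smul,
    TensorProduct.map_tmul, LinearMap.id_apply, TensorProduct.tmul_sum,
    ← TensorProduct.smul_tmul', TensorProduct.tmul_smul, ha', smul_smul, Finset.smul_sum]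
  refine (Fintype.sum_equiv (Equiv.mulLeft n) _ _ fun m => ?_).symm
  rw [Equiv.coe_mulLeft, show (n * m)⁻¹ * (n * p) = m⁻¹ * p by group]
  congr 1
  push_cast
  rw [hd.cocycle_eq_coboundary n.2 m.2 (mul_mem (inv_mem m.2) p.2)]
  push_cast [mul_inv_rev, mul_assoc, inv_mul_cancel_left, mul_inv_cancel_left]
  field_simp

theorem bComul_comp_bMul_eq_of_isAssocMap (hd : ClassData ω N κ ε) (hS : IsBStruct ω N hN ε S)
    {a : ((↥N →₀ k) ⊗[k] (↥N →₀ k)) ⊗[k] (↥N →₀ k)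
      →ₗ[k] (↥N →₀ k) ⊗[k] ((↥N →₀ k) ⊗[k] (↥N →₀ k))}
    (ha : IsAssocMap S S S a) :
    bComul N κ ∘ₗ bMul N κ
      = TensorProduct.map LinearMap.id (bMul N κ) ∘ₗ a
          ∘ₗ TensorProduct.map (bComul N κ) LinearMap.id := by
  refine tensor_ext_bGen fun n p => ?_
  have ha' (m : ↥N) := ha m ↑(m⁻¹ * n) p _ _ _ (hS.bGen_mem m) (hS.bGen_mem _) (hS.bGen_mem p)
  simp only [LinearMap.comp_apply, bComul_bGen, bMul_bGen, map_sum, map_smul,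
    TensorProduct.map_tmul, LinearMap.id_apply, TensorProduct.sum_tmul,
    ← TensorProduct.smul_tmul', TensorProduct.tmul_smul, ha', smul_smul, Finset.smul_sum]
  refine Finset.sum_congr rfl fun m _ => ?_
  rw [show m⁻¹ * n * p = m⁻¹ * (n * p) by group]
  congr 1
  push_cast
  rw [hd.cocycle_eq_coboundary m.2 (mul_mem (inv_mem m.2) n.2) p.2]
  push_cast [mul_inv_rev, mul_assoc, inv_mul_cancel_left, mul_inv_cancel_left]
  field_simp

end YetterDrinfeld

end DW

theorem B_rigidFrobenius_general {k : Type*} [Field k] {H : Type*} [Group H]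
    [DecidableEq H] (ω : H → H → H → kˣ)
    (hnorm : IsNormalized ω)
    (N : Subgroup H) (hN : N.Normal) [Fintype ↥N] [DecidableEq ↥N]
    (κ ε : H → H → kˣ) (hdata : ClassData ω N κ ε) :
    ∃ (S : YDOn k ω (↥N →₀ k)) (mulB : (↥N →₀ k) ⊗[k] (↥N →₀ k) →ₗ[k] (↥N →₀ k)),
      IsBStruct ω N hN ε S ∧ IsBMul N κ mulB ∧
      -- the multiplication is a morphism in Z(Vect_H^ω)
      (∀ T : YDOn k ω ((↥N →₀ k) ⊗[k] (↥N →₀ k)),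
          IsTensorStruct S S T → IsYDHom T S mulB) ∧
      -- the unit e_1 is a morphism in Z(Vect_H^ω) and B is unital
      (bGen k N 1 ∈ S.grading 1) ∧
      (∀ h : H, S.act h (bGen k N 1) = bGen k N 1) ∧
      (∀ x : ↥N →₀ k, mulB (bGen k N 1 ⊗ₜ[k] x) = x ∧ mulB (x ⊗ₜ[k] bGen k N 1) = x) ∧
      -- associativity in the category
      (∀ a, IsAssocMap S S S a →
          mulB ∘ₗ TensorProduct.map mulB LinearMap.id
            = mulB ∘ₗ TensorProduct.map LinearMap.id mulB ∘ₗ a) ∧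
      -- commutativity
      (∀ c, IsBraidingMap S S c → mulB ∘ₗ c = mulB) ∧
      -- connectedness
      Module.finrank k
        ↥(S.grading 1 ⊓ ⨅ h : H,
            LinearMap.eqLocus (S.act h) (LinearMap.id : (↥N →₀ k) →ₗ[k] _)) = 1 ∧
      -- if |N| is invertible, B(N,κ,ε) is a rigid Frobenius algebra
      ((Nat.card ↥N : k) ≠ 0 →
        ∃ (ΔB : (↥N →₀ k) →ₗ[k] (↥N →₀ k) ⊗[k] (↥N →₀ k)) (εB : (↥N →₀ k) →ₗ[k] k),
          -- the comultiplication and counit formulas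
          (∀ n : ↥N, ΔB (bGen k N n)
              = ∑ m : ↥N, ((κ ↑m (↑m⁻¹ * ↑n) : kˣ) : k)
                  • (bGen k N m ⊗ₜ[k] bGen k N (m⁻¹ * n))) ∧
          (∀ n : ↥N, εB (bGen k N n) = if n = 1 then 1 else 0) ∧
          -- Δ and ε are morphisms in Z(Vect_H^ω)
          (∀ T : YDOn k ω ((↥N →₀ k) ⊗[k] (↥N →₀ k)),
              IsTensorStruct S S T → IsYDHom S T ΔB) ∧
          (∀ h : H, εB ∘ₗ S.act h = εB) ∧
          (∀ d : H, d ≠ 1 → ∀ v ∈ S.grading d, εB v = 0) ∧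
          -- coassociativity and counitality
          (∀ a, IsAssocMap S S S a →
              a ∘ₗ TensorProduct.map ΔB LinearMap.id ∘ₗ ΔB
                = TensorProduct.map LinearMap.id ΔB ∘ₗ ΔB) ∧
          ((TensorProduct.lid k (↥N →₀ k)).toLinearMap
              ∘ₗ TensorProduct.map εB LinearMap.id ∘ₗ ΔB = LinearMap.id) ∧
          ((TensorProduct.rid k (↥N →₀ k)).toLinearMap
              ∘ₗ TensorProduct.map LinearMap.id εB ∘ₗ ΔB = LinearMap.id) ∧
          -- the Frobenius compatibility conditions
          (∀ a a', IsAssocMap S S S a → IsAssocInvMap S S S a' →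
              TensorProduct.map mulB LinearMap.id ∘ₗ a'
                  ∘ₗ TensorProduct.map LinearMap.id ΔB = ΔB ∘ₗ mulB ∧
              ΔB ∘ₗ mulB = TensorProduct.map LinearMap.id mulB ∘ₗ a
                  ∘ₗ TensorProduct.map ΔB LinearMap.id) ∧
          -- specialness: m∘Δ = |N|·id and ε_B(1_B) = 1
          (mulB ∘ₗ ΔB = (Nat.card ↥N : k) • LinearMap.id) ∧
          εB (bGen k N 1) = 1) := by
  have hS := bYD_isBStruct (hN := hN) hdata hnorm
  refine ⟨bYD N ε hdata hnorm, bMul N κ, hS, bMul_bGen, fun T hT => bMul_isYDHom hdata hS hT,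
    hS.bGen_mem 1, hS.act_bGen_one hdata hnorm,
    fun x => ⟨bMul_bGen_one_left hdata x, bMul_bGen_one_right hdata x⟩,
    fun a ha => bMul_assoc hdata hS ha, fun c hc => bMul_comp_braiding hdata hS hc,
    finrank_invariants_eq_one hdata hnorm hS, fun _ => ?_⟩
  exact ⟨bComul N κ, bCounit N, bComul_bGen, bCounit_bGen,
    fun T hT => bComul_isYDHom hdata hS hT, bCounit_comp_act hdata hnorm hS,
    fun d hd v hv => bCounit_eq_zero hS hd hv, fun a ha => bComul_coassoc hdata hS ha,
    lid_comp_bCounit_comp_bComul hdata, rid_comp_bCounit_comp_bComul hdata,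
    fun a a' ha ha' => ⟨(bComul_comp_bMul_eq_of_isAssocInvMap hdata hS ha').symm,
      bComul_comp_bMul_eq_of_isAssocMap hdata hS ha⟩,
    bMul_comp_bComul, by simp [bCounit_bGen]⟩

/-- Propositions 4.2 and 4.4: given classification data `(H, N, ω, κ, ε)`,
the twisted group algebra `B(N,κ,ε)` — with basis `{e_n : n ∈ N}`, grading `deg e_n = n`,
action `h·e_n = ε_h(n) e_{hnh⁻¹}` and multiplication `e_n e_m = κ(n,m)⁻¹ e_{nm}` — is a
connected commutative algebra in `Z(Vect_H^ω)`; if moreover `|N|` is invertible in `k` it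
is a rigid Frobenius algebra with `Δ(e_n) = ∑_{m∈N} κ(m,m⁻¹n) e_m ⊗ e_{m⁻¹n}`,
`ε_B(e_n) = δ_{n,1}`, `m∘Δ = |N|·id` and `ε_B(1_B) = 1`. -/
theorem B_rigidFrobenius {k : Type*} [Field k] [IsAlgClosed k] {H : Type*} [Group H]
    [Finite H] [DecidableEq H] (ω : H → H → H → kˣ)
    (hω : IsCocycle ω) (hnorm : IsNormalized ω)
    (N : Subgroup H) (hN : N.Normal) [Fintype ↥N] [DecidableEq ↥N]
    (κ ε : H → H → kˣ) (hdata : ClassData ω N κ ε) :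
    ∃ (S : YDOn k ω (↥N →₀ k)) (mulB : (↥N →₀ k) ⊗[k] (↥N →₀ k) →ₗ[k] (↥N →₀ k)),
      IsBStruct ω N hN ε S ∧ IsBMul N κ mulB ∧
      -- the multiplication is a morphism in Z(Vect_H^ω)
      (∀ T : YDOn k ω ((↥N →₀ k) ⊗[k] (↥N →₀ k)),
          IsTensorStruct S S T → IsYDHom T S mulB) ∧
      -- the unit e_1 is a morphism in Z(Vect_H^ω) and B is unital
      (bGen k N 1 ∈ S.grading 1) ∧
      (∀ h : H, S.act h (bGen k N 1) = bGen k N 1) ∧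
      (∀ x : ↥N →₀ k, mulB (bGen k N 1 ⊗ₜ[k] x) = x ∧ mulB (x ⊗ₜ[k] bGen k N 1) = x) ∧
      -- associativity in the category
      (∀ a, IsAssocMap S S S a →
          mulB ∘ₗ TensorProduct.map mulB LinearMap.id
            = mulB ∘ₗ TensorProduct.map LinearMap.id mulB ∘ₗ a) ∧
      -- commutativity
      (∀ c, IsBraidingMap S S c → mulB ∘ₗ c = mulB) ∧
      -- connectedness
      Module.finrank k
        ↥(S.grading 1 ⊓ ⨅ h : H,
            LinearMap.eqLocus (S.act h) (LinearMap.id : (↥N →₀ k) →ₗ[k] _)) = 1 ∧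
      -- if |N| is invertible, B(N,κ,ε) is a rigid Frobenius algebra
      ((Nat.card ↥N : k) ≠ 0 →
        ∃ (ΔB : (↥N →₀ k) →ₗ[k] (↥N →₀ k) ⊗[k] (↥N →₀ k)) (εB : (↥N →₀ k) →ₗ[k] k),
          -- the comultiplication and counit formulas
          (∀ n : ↥N, ΔB (bGen k N n)
              = ∑ m : ↥N, ((κ ↑m (↑m⁻¹ * ↑n) : kˣ) : k)
                  • (bGen k N m ⊗ₜ[k] bGen k N (m⁻¹ * n))) ∧
          (∀ n : ↥N, εB (bGen k N n) = if n = 1 then 1 else 0) ∧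
          -- Δ and ε are morphisms in Z(Vect_H^ω)
          (∀ T : YDOn k ω ((↥N →₀ k) ⊗[k] (↥N →₀ k)),
              IsTensorStruct S S T → IsYDHom S T ΔB) ∧
          (∀ h : H, εB ∘ₗ S.act h = εB) ∧
          (∀ d : H, d ≠ 1 → ∀ v ∈ S.grading d, εB v = 0) ∧
          -- coassociativity and counitality
          (∀ a, IsAssocMap S S S a →
              a ∘ₗ TensorProduct.map ΔB LinearMap.id ∘ₗ ΔB
                = TensorProduct.map LinearMap.id ΔB ∘ₗ ΔB) ∧
          ((TensorProduct.lid k (↥N →₀ k)).toLinearMap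
              ∘ₗ TensorProduct.map εB LinearMap.id ∘ₗ ΔB = LinearMap.id) ∧
          ((TensorProduct.rid k (↥N →₀ k)).toLinearMap
              ∘ₗ TensorProduct.map LinearMap.id εB ∘ₗ ΔB = LinearMap.id) ∧
          -- the Frobenius compatibility conditions
          (∀ a a', IsAssocMap S S S a → IsAssocInvMap S S S a' →
              TensorProduct.map mulB LinearMap.id ∘ₗ a'
                  ∘ₗ TensorProduct.map LinearMap.id ΔB = ΔB ∘ₗ mulB ∧
              ΔB ∘ₗ mulB = TensorProduct.map LinearMap.id mulB ∘ₗ a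
                  ∘ₗ TensorProduct.map ΔB LinearMap.id) ∧
          -- specialness: m∘Δ = |N|·id and ε_B(1_B) = 1
          (mulB ∘ₗ ΔB = (Nat.card ↥N : k) • LinearMap.id) ∧
          εB (bGen k N 1) = 1) :=
  B_rigidFrobenius_general ω hnorm N hN κ ε hdata
end
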